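/- arXiv:1602.02844 — 3 statements merged into one kernel-verified Lean document; each statement's English description precedes it below -/
import Mathlib

section
/- Let u, v be rational numbers with v ≠ 0 satisfying 2u²v² − 2uv² + 2u² + uv − 2u + v = 0. Define x = −(4uv² + 4u + 4v − 4)/v² and y = −(8uv² − 4v² + 8u + 8v − 8)/v³. Then (x, y) satisfies y² − 3xy − 12y = x³ + 6x² + 8x. -/
/-!
The point `(-2, 0)` lies on the curve, and the line `y = t (x + 2)` through it meets the curve
again where `t² (x + 2) - 3 t (x + 4) = x (x + 4)`. The point of the statement lies on the line
of slope `t = 2 / v`, and for that slope the residual equation is `-8 (1 + v²) / v⁴` times the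
quartic, so it holds exactly when the quartic vanishes.
-/

section

variable {K : Type*} [Field K]

theorem curve_sub_eq_mul_residual_on_line (t x : K) :
    (t * (x + 2)) ^ 2 - 3 * x * (t * (x + 2)) - 12 * (t * (x + 2)) -
        (x ^ 3 + 6 * x ^ 2 + 8 * x) =
      (x + 2) * (t ^ 2 * (x + 2) - 3 * t * (x + 4) - x * (x + 4)) := by
  ring

theorem residual_on_line_eq_mul_quartic (u v : K) (hv : v ≠ 0) :
    let x : K := -(4 * u * v ^ 2 + 4 * u + 4 * v - 4) / v ^ 2
    (2 / v) ^ 2 * (x + 2) - 3 * (2 / v) * (x + 4) - x * (x + 4) =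
      -8 * (1 + v ^ 2) / v ^ 4 *
        (2 * u ^ 2 * v ^ 2 - 2 * u * v ^ 2 + 2 * u ^ 2 + u * v - 2 * u + v) := by
  intro x
  simp only [x]
  field_simp
  ring

end

/-- The rational map from solutions of the quartic `2u²v² - 2uv² + 2u² + uv - 2u + v = 0`
to points on the cubic curve `y² - 3xy - 12y = x³ + 6x² + 8x`. -/
theorem quartic_to_curve (u v : ℚ) (hv : v ≠ 0)
    (h : 2 * u ^ 2 * v ^ 2 - 2 * u * v ^ 2 + 2 * u ^ 2 + u * v - 2 * u + v = 0) :
    let x : ℚ := -(4 * u * v ^ 2 + 4 * u + 4 * v - 4) / v ^ 2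
    let y : ℚ := -(8 * u * v ^ 2 - 4 * v ^ 2 + 8 * u + 8 * v - 8) / v ^ 3
    y ^ 2 - 3 * x * y - 12 * y = x ^ 3 + 6 * x ^ 2 + 8 * x := by
  intro x y
  have hy : y = 2 / v * (x + 2) := by
    simp only [x, y]
    field_simp
    ring
  rw [← sub_eq_zero, hy, curve_sub_eq_mul_residual_on_line,
    residual_on_line_eq_mul_quartic u v hv, h, mul_zero, mul_zero]
end

section
/- Let x, y be rational numbers with y ≠ 0 and 4x² + y² + 16x + 16 ≠ 0 satisfying y² − 3xy − 12y = x³ + 6x² + 8x. Define u = −(x³ + 4x² + 2xy − y² + 4x + 4y)/(4x² + y² + 16x + 16) and v = (2x + 4)/y. Then 2u²v² − 2uv² + 2u² + uv − 2u + v = 0. -/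
/-- The rational map from points on the cubic curve `y² - 3xy - 12y = x³ + 6x² + 8x`
to solutions of the quartic `2u²v² - 2uv² + 2u² + uv - 2u + v = 0`. -/
theorem curve_to_quartic (x y : ℚ) (hy : y ≠ 0)
    (hd : 4 * x ^ 2 + y ^ 2 + 16 * x + 16 ≠ 0)
    (h : y ^ 2 - 3 * x * y - 12 * y = x ^ 3 + 6 * x ^ 2 + 8 * x) :
    let u : ℚ := -(x ^ 3 + 4 * x ^ 2 + 2 * x * y - y ^ 2 + 4 * x + 4 * y) /
      (4 * x ^ 2 + y ^ 2 + 16 * x + 16)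
    let v : ℚ := (2 * x + 4) / y
    2 * u ^ 2 * v ^ 2 - 2 * u * v ^ 2 + 2 * u ^ 2 + u * v - 2 * u + v = 0 := by
  intro u v
  set D : ℚ := 4 * x ^ 2 + y ^ 2 + 16 * x + 16 with hD
  set U : ℚ := -(x ^ 3 + 4 * x ^ 2 + 2 * x * y - y ^ 2 + 4 * x + 4 * y) with hU
  set V : ℚ := 2 * x + 4 with hV
  have e1 : u * D = U := div_mul_cancel₀ _ hd
  have e2 : v * y = V := div_mul_cancel₀ _ hy
  have hD2y2 : D ^ 2 * y ^ 2 ≠ 0 := by positivity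
  have key : (2 * u ^ 2 * v ^ 2 - 2 * u * v ^ 2 + 2 * u ^ 2 + u * v - 2 * u + v)
      * (D ^ 2 * y ^ 2) = 0 := by
    calc (2 * u ^ 2 * v ^ 2 - 2 * u * v ^ 2 + 2 * u ^ 2 + u * v - 2 * u + v)
        * (D ^ 2 * y ^ 2)
        = 2 * (u * D) ^ 2 * (v * y) ^ 2 - 2 * (u * D) * (v * y) ^ 2 * D
          + 2 * (u * D) ^ 2 * y ^ 2 + (u * D) * (v * y) * D * y
          - 2 * (u * D) * D * y ^ 2 + (v * y) * D ^ 2 * y := by ring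
      _ = 2 * U ^ 2 * V ^ 2 - 2 * U * V ^ 2 * D + 2 * U ^ 2 * y ^ 2
          + U * V * D * y - 2 * U * D * y ^ 2 + V * D ^ 2 * y := by rw [e1, e2]
      _ = 0 := by
          rw [hU, hV, hD]
          linear_combination (-(8*x^5 + 80*x^4 + 320*x^3 + 640*x^2 + 640*x + 256)
            - y^2 * (2*x^3 + 12*x^2 + 24*x + 16)) * h
  exact (mul_eq_zero.mp key).resolve_right hD2y2
end

section
/- The set of pairs of rational numbers (u, v) with 0 < u < 1 and 0 < v < 1 satisfying 2u²v² − 2uv² + 2u² + uv − 2u + v = 0 is infinite. -/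
/-!
The discriminant of `quartic u v` in `v` is `(u + 1)² - 16u²(1 - u)²`; as a quartic in `u` with
the rational point `(0, 1)` it is birational to the elliptic curve `y² = x³ - 15x² + 128x`.
A rational point of that curve, with the sign of `y` chosen suitably, gives a `u ∈ (0, 1)` whose
discriminant is a square, hence a root `v`; roots come in pairs `v, v⁻¹`, so one of them lies in
`(0, 1)`. Once `|x|₂ > 1`, doubling multiplies `|x|₂` by `4`, so the doublings of
`(49/16, 1071/64)` give solutions with pairwise distinct `2`-adic norms `|u|₂² = |4|₂ / |x|₂`.
-/

open WeierstrassCurve.Affine IsAbsoluteValue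

lemma padicNorm.add_eq_left_of_lt {p : ℕ} [Fact p.Prime] {q r : ℚ}
    (h : padicNorm p r < padicNorm p q) : padicNorm p (q + r) = padicNorm p q := by
  rw [padicNorm.add_eq_max_of_ne h.ne', max_eq_left h.le]

def twoTorsionCurve (a b : ℚ) : WeierstrassCurve.Affine ℚ :=
  (WeierstrassCurve.mk 0 a 0 b 0).toAffine

def twoTorsionCurve.double (a b : ℚ) (P : ℚ × ℚ) : ℚ × ℚ :=
  let ℓ := (twoTorsionCurve a b).slope P.1 P.1 P.2 P.2
  ((twoTorsionCurve a b).addX P.1 P.1 ℓ, (twoTorsionCurve a b).addY P.1 P.1 P.2 ℓ)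

namespace twoTorsionCurve

variable {a b x y : ℚ}

lemma equation_iff : (twoTorsionCurve a b).Equation x y ↔ y ^ 2 = x ^ 3 + a * x ^ 2 + b * x := by
  simp [twoTorsionCurve, WeierstrassCurve.Affine.equation_iff]

lemma ne_negY (hy : y ≠ 0) : y ≠ (twoTorsionCurve a b).negY x y := by
  simp only [twoTorsionCurve, negY]
  intro h
  exact hy (by linarith)

lemma equation_double (h : (twoTorsionCurve a b).Equation x y) (hy : y ≠ 0) :
    (twoTorsionCurve a b).Equation (double a b (x, y)).1 (double a b (x, y)).2 :=
  equation_add h h fun hxy ↦ ne_negY hy hxy.2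

lemma double_fst (h : (twoTorsionCurve a b).Equation x y) (hy : y ≠ 0) :
    (double a b (x, y)).1 = (x ^ 2 - b) ^ 2 / (4 * y ^ 2) := by
  rw [equation_iff] at h
  simp only [double, addX, slope_of_Y_ne rfl (ne_negY hy)]
  simp only [twoTorsionCurve, negY, zero_mul, sub_zero, add_zero]
  rw [sub_neg_eq_add]
  field_simp
  linear_combination (-16 * (2 * x + a)) * h

section padicNorm

variable {p : ℕ} [Fact p.Prime]

lemma padicNorm_sq_eq_pow_three (h : (twoTorsionCurve a b).Equation x y)
    (ha : padicNorm p a ≤ 1) (hb : padicNorm p b ≤ 1) (hx : 1 < padicNorm p x) :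
    padicNorm p y ^ 2 = padicNorm p x ^ 3 := by
  rw [equation_iff] at h
  have hlower : padicNorm p (a * x ^ 2 + b * x) < padicNorm p (x ^ 3) := by
    calc padicNorm p (a * x ^ 2 + b * x)
        ≤ max (padicNorm p (a * x ^ 2)) (padicNorm p (b * x)) := padicNorm.nonarchimedean
      _ ≤ padicNorm p x ^ 2 := by
        simp only [padicNorm.mul, abv_pow (padicNorm p)]
        refine max_le (mul_le_of_le_one_left (by positivity) ha) ?_
        nlinarith [padicNorm.nonneg (p := p) b]
      _ < padicNorm p x ^ 3 := pow_lt_pow_right₀ hx (by norm_num)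
      _ = padicNorm p (x ^ 3) := (abv_pow (padicNorm p) x 3).symm
  rw [← abv_pow (padicNorm p) y, h, add_assoc, padicNorm.add_eq_left_of_lt hlower,
    abv_pow (padicNorm p)]

lemma y_ne_zero_of_one_lt_padicNorm (h : (twoTorsionCurve a b).Equation x y)
    (ha : padicNorm p a ≤ 1) (hb : padicNorm p b ≤ 1) (hx : 1 < padicNorm p x) : y ≠ 0 := by
  rintro rfl
  have := padicNorm_sq_eq_pow_three h ha hb hx
  rw [padicNorm.zero] at this
  nlinarith [pow_lt_pow_left₀ hx zero_le_one three_ne_zero]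

lemma padicNorm_double_fst (h : (twoTorsionCurve a b).Equation x y)
    (ha : padicNorm p a ≤ 1) (hb : padicNorm p b ≤ 1) (hx : 1 < padicNorm p x) :
    padicNorm p (double a b (x, y)).1 = padicNorm p x / padicNorm p 4 := by
  have hnum : padicNorm p (x ^ 2 - b) = padicNorm p x ^ 2 := by
    rw [sub_eq_add_neg, ← abv_pow (padicNorm p) x]
    refine padicNorm.add_eq_left_of_lt ?_
    rw [padicNorm.neg, abv_pow (padicNorm p)]
    exact hb.trans_lt (one_lt_pow₀ hx two_ne_zero)
  have h4 : padicNorm p 4 ≠ 0 := padicNorm.nonzero four_ne_zero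
  have hx0 : padicNorm p x ≠ 0 := by linarith
  rw [double_fst h (y_ne_zero_of_one_lt_padicNorm h ha hb hx), padicNorm.div, padicNorm.mul,
    abv_pow (padicNorm p), abv_pow (padicNorm p), hnum, padicNorm_sq_eq_pow_three h ha hb hx]
  field_simp

lemma equation_and_padicNorm_iterate_double {P : ℚ × ℚ}
    (h : (twoTorsionCurve a b).Equation P.1 P.2)
    (ha : padicNorm p a ≤ 1) (hb : padicNorm p b ≤ 1) (hx : 1 < padicNorm p P.1) (n : ℕ) :
    (twoTorsionCurve a b).Equation ((double a b)^[n] P).1 ((double a b)^[n] P).2 ∧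
      padicNorm p ((double a b)^[n] P).1 = padicNorm p P.1 / padicNorm p 4 ^ n := by
  induction n with
  | zero => exact ⟨h, by simp⟩
  | succ n ih =>
    obtain ⟨hn, hxn⟩ := ih
    have h4 : 0 < padicNorm p 4 :=
      (padicNorm.nonneg 4).lt_of_ne (padicNorm.nonzero four_ne_zero).symm
    have hxn' : 1 < padicNorm p ((double a b)^[n] P).1 := by
      rw [hxn]
      refine hx.trans_le (le_div_self (padicNorm.nonneg _) (pow_pos h4 n) (pow_le_one₀ h4.le ?_))
      exact_mod_cast padicNorm.of_nat 4
    rw [Function.iterate_succ_apply']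
    refine ⟨equation_double hn (y_ne_zero_of_one_lt_padicNorm hn ha hb hxn'), ?_⟩
    rw [padicNorm_double_fst hn ha hb hxn', hxn, pow_succ, div_div]

end padicNorm
end twoTorsionCurve

section quartic

open Set

def quartic (u v : ℚ) : ℚ := 2 * u ^ 2 * v ^ 2 - 2 * u * v ^ 2 + 2 * u ^ 2 + u * v - 2 * u + v

def quarticBox : Set (ℚ × ℚ) :=
  {uv | 0 < uv.1 ∧ uv.1 < 1 ∧ 0 < uv.2 ∧ uv.2 < 1 ∧ quartic uv.1 uv.2 = 0}

variable {u v : ℚ}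

lemma quartic_inv (hv : v ≠ 0) : quartic u v⁻¹ = quartic u v / v ^ 2 := by
  unfold quartic
  field_simp
  ring

lemma quartic_one_pos (u : ℚ) : 0 < quartic u 1 := by
  unfold quartic
  nlinarith [sq_nonneg (8 * u - 3)]

lemma pos_of_quartic_eq_zero (hu : u ∈ Ioo 0 1) (h : quartic u v = 0) : 0 < v := by
  have hbalance : (u + 1) * v = 2 * u * (1 - u) * (v ^ 2 + 1) := by
    unfold quartic at h
    linear_combination h
  have : 0 < 2 * u * (1 - u) * (v ^ 2 + 1) :=
    mul_pos (mul_pos (mul_pos two_pos hu.1) (sub_pos.2 hu.2)) (by positivity)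
  by_contra! hv
  nlinarith [hu.1]

lemma exists_quartic_eq_zero_mem_Ioo {Y : ℚ} (hu : u ∈ Ioo 0 1)
    (hY : (u + 1) ^ 2 - 16 * u ^ 2 * (1 - u) ^ 2 = Y ^ 2) :
    ∃ v ∈ Ioo 0 1, quartic u v = 0 := by
  have h1u : 1 - u ≠ 0 := (sub_pos.2 hu.2).ne'
  have hu0 : u ≠ 0 := hu.1.ne'
  set v := (u + 1 + Y) / (4 * u * (1 - u))
  have hv : quartic u v = 0 := by
    unfold quartic v
    field_simp
    linear_combination (2 * (1 - u)) * hY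
  have hv0 : 0 < v := pos_of_quartic_eq_zero hu hv
  rcases lt_trichotomy v 1 with hlt | heq | hgt
  · exact ⟨v, ⟨hv0, hlt⟩, hv⟩
  · exact absurd (heq ▸ hv) (quartic_one_pos u).ne'
  · refine ⟨v⁻¹, ⟨inv_pos.2 hv0, inv_lt_one_of_one_lt₀ hgt⟩, ?_⟩
    rw [quartic_inv hv0.ne', hv, zero_div]

end quartic

section quarticU

open Set

/-- Inverse to `x = 2 (Y + u + 1) / u²`, which maps `Y² = (u + 1)² - 16u²(1 - u)²` to the curve
`y² = x³ - 15x² + 128x`. -/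
def quarticU (x y : ℚ) : ℚ := 2 * (x - 16) / (y - x - 32)

variable {x y : ℚ}

lemma discr_quarticU (h : (twoTorsionCurve (-15) 128).Equation x y) (hne : y - x - 32 ≠ 0) :
    (quarticU x y + 1) ^ 2 - 16 * quarticU x y ^ 2 * (1 - quarticU x y) ^ 2 =
      ((x * quarticU x y ^ 2 - 2 * quarticU x y - 2) / 2) ^ 2 := by
  rw [twoTorsionCurve.equation_iff] at h
  unfold quarticU
  field_simp
  linear_combination (4 * (x - 16) ^ 3) * h

lemma quarticU_mem_Ioo (h : (twoTorsionCurve (-15) 128).Equation x y)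
    (hsign : 0 < (x - 16) * y) : quarticU x y ∈ Ioo 0 1 := by
  rw [twoTorsionCurve.equation_iff] at h
  have hy0 : y ≠ 0 := by rintro rfl; simp at hsign
  have hx : 0 < x := by
    by_contra! hx
    nlinarith [sq_nonneg (x - 8), sq_pos_of_ne_zero hy0]
  unfold quarticU
  rcases lt_or_gt_of_ne (sub_ne_zero.1 (left_ne_zero_of_mul hsign.ne')) with hlt | hgt
  · have hy : y < 0 := neg_of_mul_pos_right hsign (by linarith)
    exact ⟨div_pos_of_neg_of_neg (by linarith) (by linarith),
      (div_lt_one_of_neg (by linarith)).2 (by linarith)⟩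
  · have hy : 0 < y := pos_of_mul_pos_right hsign (by linarith)
    have hxy : x + 32 < y := by
      refine lt_of_pow_lt_pow_left₀ 2 hy.le ?_
      nlinarith [mul_pos (sub_pos.2 hgt) (by positivity : (0 : ℚ) < x ^ 2 + 64)]
    have h3xy : 3 * x < y := by
      refine lt_of_pow_lt_pow_left₀ 2 hy.le ?_
      nlinarith [mul_pos (mul_pos hx (by linarith : (0 : ℚ) < x - 8)) (sub_pos.2 hgt)]
    exact ⟨div_pos (by linarith) (by linarith), (div_lt_one (by linarith)).2 (by linarith)⟩

variable {p : ℕ} [Fact p.Prime]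

lemma padicNorm_quarticU_sq (h : (twoTorsionCurve (-15) 128).Equation x y)
    (hx : 1 < padicNorm p x) : padicNorm p (quarticU x y) ^ 2 = padicNorm p 4 / padicNorm p x := by
  have hint (z : ℤ) : padicNorm p z ≤ 1 := padicNorm.of_int z
  have hy2 := twoTorsionCurve.padicNorm_sq_eq_pow_three h (by exact_mod_cast hint (-15))
    (by exact_mod_cast hint 128) hx
  have hxy : padicNorm p x < padicNorm p y := by
    refine lt_of_pow_lt_pow_left₀ 2 (padicNorm.nonneg y) ?_
    rw [hy2]
    exact pow_lt_pow_right₀ hx (by norm_num)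
  have hnum : padicNorm p (x - 16) = padicNorm p x := by
    rw [sub_eq_add_neg]
    refine padicNorm.add_eq_left_of_lt ?_
    rw [padicNorm.neg]
    exact (by exact_mod_cast hint 16 : padicNorm p 16 ≤ 1).trans_lt hx
  have hden : padicNorm p (y - x - 32) = padicNorm p y := by
    have hx32 : padicNorm p (x + 32) = padicNorm p x :=
      padicNorm.add_eq_left_of_lt ((by exact_mod_cast hint 32 : padicNorm p 32 ≤ 1).trans_lt hx)
    rw [sub_sub, sub_eq_add_neg]
    refine padicNorm.add_eq_left_of_lt ?_
    rwa [padicNorm.neg, hx32]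
  have h4 : padicNorm p 4 = padicNorm p 2 ^ 2 := by
    rw [← abv_pow (padicNorm p)]
    norm_num
  have hx0 : padicNorm p x ≠ 0 := by linarith
  unfold quarticU
  rw [padicNorm.div, padicNorm.mul, hnum, hden, div_pow, mul_pow, hy2, h4]
  field_simp

lemma exists_mem_quarticBox (h : (twoTorsionCurve (-15) 128).Equation x y)
    (hx : 1 < padicNorm p x) :
    ∃ uv ∈ quarticBox, padicNorm p uv.1 ^ 2 = padicNorm p 4 / padicNorm p x := by
  have hy : y ≠ 0 := twoTorsionCurve.y_ne_zero_of_one_lt_padicNorm h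
    (by exact_mod_cast padicNorm.of_int (-15)) (by exact_mod_cast padicNorm.of_int 128) hx
  have hx16 : x - 16 ≠ 0 := by
    rw [sub_ne_zero]
    rintro rfl
    exact hx.not_ge (by exact_mod_cast padicNorm.of_int 16)
  obtain ⟨y', h', hsign⟩ :
      ∃ y', (twoTorsionCurve (-15) 128).Equation x y' ∧ 0 < (x - 16) * y' := by
    rcases (mul_ne_zero hx16 hy).lt_or_gt with hneg | hpos
    · refine ⟨-y, ?_, by linarith⟩
      rw [twoTorsionCurve.equation_iff] at h ⊢
      rwa [neg_sq]
    · exact ⟨y, h, hpos⟩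
  have hu := quarticU_mem_Ioo h' hsign
  have hne : y' - x - 32 ≠ 0 := fun h0 ↦ by simp [quarticU, h0] at hu
  obtain ⟨v, hv, hquartic⟩ := exists_quartic_eq_zero_mem_Ioo hu (discr_quarticU h' hne)
  exact ⟨(quarticU x y', v), ⟨hu.1, hu.2, hv.1, hv.2, hquartic⟩,
    padicNorm_quarticU_sq h' hx⟩

end quarticU

lemma padicNorm_two_four : padicNorm 2 4 = 1 / 4 := by
  rw [show (4 : ℚ) = (2 : ℕ) ^ 2 by norm_num, abv_pow (padicNorm 2),
    padicNorm.padicNorm_p_of_prime]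
  norm_num

lemma exists_mem_quarticBox_padicNorm_two_sq (n : ℕ) :
    ∃ uv ∈ quarticBox, padicNorm 2 uv.1 ^ 2 = (1 / 4) ^ (n + 3) := by
  -- `(49/16, 1071/64) = 3 • (8, 24) + (0, 0)`.
  have hP : (twoTorsionCurve (-15) 128).Equation (49 / 16) (1071 / 64) := by
    rw [twoTorsionCurve.equation_iff]
    norm_num
  have hx : padicNorm 2 (49 / 16) = 16 := by
    rw [padicNorm.div, show (16 : ℚ) = (2 : ℕ) ^ 4 by norm_num, abv_pow (padicNorm 2),
      padicNorm.padicNorm_p_of_prime, show (49 : ℚ) = (49 : ℕ) by norm_num,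
      (padicNorm.nat_eq_one_iff 49).2 (by norm_num)]
    norm_num
  obtain ⟨hPn, hxn⟩ := twoTorsionCurve.equation_and_padicNorm_iterate_double (p := 2)
    (P := (49 / 16, 1071 / 64)) hP (by exact_mod_cast padicNorm.of_int (-15))
    (by exact_mod_cast padicNorm.of_int 128) (by rw [hx]; norm_num) n
  rw [hx, padicNorm_two_four] at hxn
  obtain ⟨uv, huv, hnorm⟩ := exists_mem_quarticBox hPn (by
    rw [hxn, one_lt_div (by positivity)]
    exact (pow_le_one₀ (by norm_num) (by norm_num)).trans_lt (by norm_num))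
  refine ⟨uv, huv, ?_⟩
  rw [hnorm, hxn, padicNorm_two_four]
  field_simp
  ring

/-- The set of rational pairs `(u, v)` with `0 < u < 1`, `0 < v < 1` satisfying
`2u²v² - 2uv² + 2u² + uv - 2u + v = 0` is infinite. -/
theorem infinitely_many_quartic_solutions :
    {uv : ℚ × ℚ | 0 < uv.1 ∧ uv.1 < 1 ∧ 0 < uv.2 ∧ uv.2 < 1 ∧
      2 * uv.1 ^ 2 * uv.2 ^ 2 - 2 * uv.1 * uv.2 ^ 2 + 2 * uv.1 ^ 2 +
        uv.1 * uv.2 - 2 * uv.1 + uv.2 = 0}.Infinite := by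
  change quarticBox.Infinite
  choose f hf hnorm using exists_mem_quarticBox_padicNorm_two_sq
  refine Set.infinite_of_injective_forall_mem (fun m n hmn ↦ ?_) hf
  have hpow : ((1 : ℚ) / 4) ^ (m + 3) = (1 / 4) ^ (n + 3) :=
    (hnorm m).symm.trans (hmn ▸ hnorm n)
  exact Nat.add_right_cancel (pow_right_injective₀ (by norm_num) (by norm_num) hpow)
end
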